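/- arXiv:1510.05140 — 7 statements merged into one kernel-verified Lean document; each statement's English description precedes it below -/
import Mathlib

section
/- Let g₀ and g₂ be independent exponentially distributed random variables with rate parameters λ₀ > 0 and λ₂ > 0, and fix P > 0, Q > 0, σ₀² > 0 and R > 0. Then the outage probability p₀ = ℙ( log₂(1 + g₀P/(g₂Q + σ₀²)) < R ) equals 1 − [ (λ₂/((2^R−1)Q)) / (λ₀/P + λ₂/((2^R−1)Q)) ] · e^{−λ₀ σ₀² (2^R−1)/P}. -/
/-!
Outage means `g₀ < c + d g₂` with `c = (2^R - 1) σ₀² / P` and `d = (2^R - 1) Q / P`, since the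
gains are almost surely nonnegative. Conditioning on `g₂`, the complementary event has probability
`exp (-λ₀ (c + d g₂))`, and averaging over `g₂ ~ Exp(λ₂)` is a Laplace transform:
`E[exp (-s g₂)] = λ₂ / (λ₂ + s)`.
-/

open MeasureTheory ProbabilityTheory Real Set

namespace ProbabilityTheory

lemma expMeasure_eq_withDensity (r : ℝ) : expMeasure r = volume.withDensity (exponentialPDF r) :=
  rfl

lemma measurable_exponentialPDF (r : ℝ) : Measurable (exponentialPDF r) :=
  (measurable_exponentialPDFReal r).ennreal_ofReal

lemma ae_nonneg_expMeasure (r : ℝ) : ∀ᵐ x ∂expMeasure r, 0 ≤ x := by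
  rw [expMeasure_eq_withDensity]
  refine (ae_withDensity_iff (measurable_exponentialPDF r)).2 (ae_of_all _ fun x hx => ?_)
  by_contra! hneg
  exact hx (exponentialPDF_of_neg hneg)

lemma expMeasure_Ici {r c : ℝ} (hr : 0 < r) (hc : 0 ≤ c) :
    expMeasure r (Ici c) = ENNReal.ofReal (exp (-(r * c))) := by
  have := isProbabilityMeasure_expMeasure hr
  have hIio : expMeasure r (Iio c) = ENNReal.ofReal (1 - exp (-(r * c))) := by
    rw [expMeasure_eq_withDensity, withDensity_apply _ measurableSet_Iio,
      setLIntegral_congr Iio_ae_eq_Iic, ← withDensity_apply _ measurableSet_Iic,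
      ← expMeasure_eq_withDensity, ← ofReal_cdf, cdf_expMeasure_eq hr, if_pos hc]
  have hle : exp (-(r * c)) ≤ 1 := exp_le_one_iff.2 (by nlinarith)
  rw [← compl_Iio, prob_compl_eq_one_sub measurableSet_Iio, hIio, ← ENNReal.ofReal_one,
    ← ENNReal.ofReal_sub _ (sub_nonneg.2 hle), sub_sub_cancel]

-- The tilted density `exponentialPDF r x * exp (-s x)` is a multiple of `exponentialPDF (r + s)`.
lemma lintegral_exp_neg_mul_expMeasure {r s : ℝ} (hr : 0 < r) (hs : 0 ≤ s) :
    ∫⁻ x, ENNReal.ofReal (exp (-(s * x))) ∂expMeasure r = ENNReal.ofReal (r / (r + s)) := by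
  have htilt : ∀ x, exponentialPDF r x * ENNReal.ofReal (exp (-(s * x))) =
      ENNReal.ofReal (r / (r + s)) * exponentialPDF (r + s) x := by
    intro x
    rcases lt_or_ge x 0 with hx | hx
    · simp [exponentialPDF_of_neg hx]
    rw [exponentialPDF_of_nonneg hx, exponentialPDF_of_nonneg hx, ← ENNReal.ofReal_mul,
      ← ENNReal.ofReal_mul (by positivity)]
    · congr 1
      rw [mul_assoc, ← exp_add, ← mul_assoc, div_mul_cancel₀ _ (by positivity)]
      ring_nf
    · positivity
  rw [expMeasure_eq_withDensity,
    lintegral_withDensity_eq_lintegral_mul _ (measurable_exponentialPDF r) (by fun_prop)]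
  simp only [Pi.mul_apply, htilt]
  rw [lintegral_const_mul _ (measurable_exponentialPDF _),
    lintegral_exponentialPDF_eq_one (by positivity), mul_one]

lemma expMeasure_prod_setOf_add_mul_le {r₀ r₁ c d : ℝ} (hr₀ : 0 < r₀) (hr₁ : 0 < r₁)
    (hc : 0 ≤ c) (hd : 0 ≤ d) :
    (expMeasure r₀).prod (expMeasure r₁) {p | c + d * p.2 ≤ p.1} =
      ENNReal.ofReal (exp (-(r₀ * c)) * (r₁ / (r₁ + r₀ * d))) := by
  have := isProbabilityMeasure_expMeasure hr₀
  have := isProbabilityMeasure_expMeasure hr₁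
  have hsection : ∀ᵐ y ∂expMeasure r₁,
      expMeasure r₀ ((fun x => (x, y)) ⁻¹' {p : ℝ × ℝ | c + d * p.2 ≤ p.1}) =
        ENNReal.ofReal (exp (-(r₀ * c))) * ENNReal.ofReal (exp (-(r₀ * d * y))) := by
    filter_upwards [ae_nonneg_expMeasure r₁] with y hy
    rw [← ENNReal.ofReal_mul (exp_pos _).le, ← exp_add]
    convert expMeasure_Ici hr₀ (add_nonneg hc (mul_nonneg hd hy)) using 3
    · rfl
    · ring
  rw [Measure.prod_apply_symm (measurableSet_le (by fun_prop) measurable_fst),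
    lintegral_congr_ae hsection, lintegral_const_mul _ (by fun_prop),
    lintegral_exp_neg_mul_expMeasure hr₁ (by positivity),
    ← ENNReal.ofReal_mul (exp_pos _).le]

lemma measure_setOf_add_mul_le_of_indepFun {Ω : Type*} [MeasurableSpace Ω] {μ : Measure Ω}
    [IsProbabilityMeasure μ] {X Y : Ω → ℝ} (hX : AEMeasurable X μ) (hY : AEMeasurable Y μ)
    (hXY : IndepFun X Y μ) {r₀ r₁ c d : ℝ} (hr₀ : 0 < r₀) (hr₁ : 0 < r₁)
    (hXr : μ.map X = expMeasure r₀) (hYr : μ.map Y = expMeasure r₁) (hc : 0 ≤ c) (hd : 0 ≤ d) :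
    μ {ω | c + d * Y ω ≤ X ω} = ENNReal.ofReal (exp (-(r₀ * c)) * (r₁ / (r₁ + r₀ * d))) := by
  change μ ((fun ω => (X ω, Y ω)) ⁻¹' {p | c + d * p.2 ≤ p.1}) = _
  rw [← Measure.map_apply_of_aemeasurable (hX.prodMk hY)
      (measurableSet_le (by fun_prop) measurable_fst),
    (indepFun_iff_map_prod_eq_prod_map_map hX hY).1 hXY, hXr, hYr,
    expMeasure_prod_setOf_add_mul_le hr₀ hr₁ hc hd]

end ProbabilityTheory

/-- Closed form of the outage probability at the suspicious receiver:
`ℙ(log₂(1 + g₀ P / (g₂ Q + σ₀²)) < R)` for independent exponential gains `g₀ ~ Exp(λ₀)`,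
`g₂ ~ Exp(λ₂)`. -/
theorem stmt_2 {Ω : Type*} [MeasurableSpace Ω] (μ : Measure Ω) [IsProbabilityMeasure μ]
    (g₀ g₂ : Ω → ℝ) (hg₀ : Measurable g₀) (hg₂ : Measurable g₂)
    (hIndep : IndepFun g₀ g₂ μ)
    (lam₀ lam₂ : ℝ) (hlam₀ : 0 < lam₀) (hlam₂ : 0 < lam₂)
    (h₀ : Measure.map g₀ μ = expMeasure lam₀)
    (h₂ : Measure.map g₂ μ = expMeasure lam₂)
    (P Q σ₀sq R : ℝ) (hP : 0 < P) (hQ : 0 < Q) (hσ : 0 < σ₀sq) (hR : 0 < R) :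
    (μ {ω | Real.logb 2 (1 + g₀ ω * P / (g₂ ω * Q + σ₀sq)) < R}).toReal =
      1 - (lam₂ / (((2 : ℝ) ^ R - 1) * Q)) /
            (lam₀ / P + lam₂ / (((2 : ℝ) ^ R - 1) * Q)) *
          Real.exp (-lam₀ * σ₀sq * ((2 : ℝ) ^ R - 1) / P) := by
  set a := (2 : ℝ) ^ R - 1
  have ha : 0 < a := sub_pos.2 (one_lt_rpow one_lt_two hR)
  have houtage : {ω | logb 2 (1 + g₀ ω * P / (g₂ ω * Q + σ₀sq)) < R} =ᵐ[μ]
      ({ω | a * σ₀sq / P + a * Q / P * g₂ ω ≤ g₀ ω}ᶜ : Set Ω) := by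
    refine Filter.eventuallyEq_set.2 ?_
    filter_upwards [ae_of_ae_map hg₀.aemeasurable (h₀ ▸ ae_nonneg_expMeasure lam₀),
      ae_of_ae_map hg₂.aemeasurable (h₂ ▸ ae_nonneg_expMeasure lam₂)] with ω h0 h2
    have hD : 0 < g₂ ω * Q + σ₀sq := by positivity
    change logb 2 _ < R ↔ ¬ (_ : ℝ) ≤ _
    rw [logb_lt_iff_lt_rpow one_lt_two (by positivity), not_le,
      show a * σ₀sq / P + a * Q / P * g₂ ω = a * (g₂ ω * Q + σ₀sq) / P by ring,
      lt_div_iff₀ hP, ← div_lt_iff₀ hD]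
    constructor <;> intro h <;> linarith
  have hmeas : MeasurableSet {ω | a * σ₀sq / P + a * Q / P * g₂ ω ≤ g₀ ω} :=
    measurableSet_le (by fun_prop) hg₀
  rw [← measureReal_def, measureReal_congr houtage,
    probReal_compl_eq_one_sub hmeas, measureReal_def,
    measure_setOf_add_mul_le_of_indepFun hg₀.aemeasurable hg₂.aemeasurable hIndep hlam₀ hlam₂
      h₀ h₂ (by positivity) (by positivity), ENNReal.toReal_ofReal (by positivity), mul_comm]
  congr 2
  · field_simp
    ring
  · ring_nf
end

section
/- Fix parameters P, σ₀², λ₀, λ₂ > 0 and δ ∈ (0,1), and define ψ(R) = (P λ₂ e^{−λ₀ σ₀² (2^R−1)/P})/(λ₀ (2^R−1)(1−δ)) − (λ₂ P)/(λ₀ (2^R−1)) for R > 0, and R₀ = log₂(1 + (−P ln(1−δ))/(λ₀ σ₀²)). Then ψ is strictly decreasing on the interval (0, R₀]. -/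
open Real

/-- `ψ` is strictly decreasing on `(0, R₀]`, where `R₀ = ψ⁻¹(0)`. -/
theorem stmt_5 (P σ₀sq lam₀ lam₂ δ : ℝ)
    (hP : 0 < P) (hσ : 0 < σ₀sq) (hlam₀ : 0 < lam₀) (hlam₂ : 0 < lam₂)
    (hδ : δ ∈ Set.Ioo (0 : ℝ) 1)
    (ψ : ℝ → ℝ)
    (hψ : ∀ R : ℝ, ψ R = P * lam₂ * Real.exp (-lam₀ * σ₀sq * ((2 : ℝ) ^ R - 1) / P) /
          (lam₀ * ((2 : ℝ) ^ R - 1) * (1 - δ)) - lam₂ * P / (lam₀ * ((2 : ℝ) ^ R - 1)))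
    (R₀ : ℝ) (hR₀ : R₀ = Real.logb 2 (1 + (-P * Real.log (1 - δ)) / (lam₀ * σ₀sq))) :
    StrictAntiOn ψ (Set.Ioc 0 R₀) := by
  obtain ⟨hδ0, hδ1⟩ := hδ
  have hb : (0:ℝ) < 1 - δ := by linarith
  have hb1 : 1 - δ < 1 := by linarith
  have hlogb : Real.log (1 - δ) < 0 := Real.log_neg hb hb1
  set a := lam₀ * σ₀sq / P with ha_def
  have ha : 0 < a := by positivity
  set K := P * lam₂ / (lam₀ * (1 - δ)) with hK_def
  have hK : 0 < K := by positivity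
  set F : ℝ → ℝ := fun R =>
      K * ((Real.exp (-(a * ((2:ℝ)^R - 1))) - (1 - δ)) / ((2:ℝ)^R - 1)) with hF_def
  -- facts about R₀
  have hA : (0:ℝ) < 1 + (-P * Real.log (1 - δ)) / (lam₀ * σ₀sq) := by
    have h1 : 0 < -P * Real.log (1 - δ) := by nlinarith
    positivity
  have h2R₀ : (2:ℝ) ^ R₀ = 1 + (-P * Real.log (1 - δ)) / (lam₀ * σ₀sq) := by
    rw [hR₀]; exact Real.rpow_logb (by norm_num) (by norm_num) hA
  have hu₀ : (2:ℝ) ^ R₀ - 1 = -Real.log (1 - δ) / a := by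
    rw [h2R₀, ha_def]
    field_simp
    ring
  have hexp₀ : Real.exp (-(a * ((2:ℝ)^R₀ - 1))) = 1 - δ := by
    rw [hu₀, show -(a * (-Real.log (1 - δ) / a)) = Real.log (1 - δ) by
      field_simp]
    exact Real.exp_log hb
  -- positivity of 2^x - 1 on the set
  have hupos : ∀ x : ℝ, 0 < x → (0:ℝ) < (2:ℝ)^x - 1 := by
    intro x hx
    have : (2:ℝ)^(0:ℝ) < (2:ℝ)^x := (Real.rpow_lt_rpow_left_iff one_lt_two).2 hx
    simpa [Real.rpow_zero] using this
  -- continuity of 2^x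
  have hcont2 : Continuous fun x : ℝ => (2:ℝ)^x := by
    rw [continuous_iff_continuousAt]
    intro x
    exact (Real.hasStrictDerivAt_const_rpow (by norm_num : (0:ℝ) < 2) x).hasDerivAt.continuousAt
  -- ψ = F on the set
  have hEq : ∀ R ∈ Set.Ioc (0:ℝ) R₀, ψ R = F R := by
    intro R hR
    have hu : (0:ℝ) < (2:ℝ)^R - 1 := hupos R hR.1
    have harg : -lam₀ * σ₀sq * ((2:ℝ)^R - 1) / P = -(a * ((2:ℝ)^R - 1)) := by
      rw [ha_def]; field_simp
    rw [hψ, hF_def, harg, hK_def]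
    field_simp
  -- StrictAntiOn F
  have hF : StrictAntiOn F (Set.Ioc 0 R₀) := by
    apply strictAntiOn_of_deriv_neg (convex_Ioc 0 R₀)
    · apply ContinuousOn.mul continuousOn_const
      apply ContinuousOn.div
      · exact ((Real.continuous_exp.comp
          ((continuous_const.mul (hcont2.sub continuous_const)).neg)).sub continuous_const).continuousOn
      · exact (hcont2.sub continuous_const).continuousOn
      · intro x hx
        exact (hupos x hx.1).ne'
    · intro x hx
      rw [interior_Ioc] at hx
      obtain ⟨hx0, hxR⟩ := hx
      set u : ℝ := (2:ℝ)^x - 1 with hu_def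
      have hu : 0 < u := hupos x hx0
      set u' : ℝ := (2:ℝ)^x * Real.log 2 with hu'_def
      have hu' : 0 < u' := by
        have h2x : (0:ℝ) < (2:ℝ)^x := Real.rpow_pos_of_pos (by norm_num) x
        have : (0:ℝ) < Real.log 2 := Real.log_pos (by norm_num)
        positivity
      have hdu : HasDerivAt (fun R : ℝ => (2:ℝ)^R - 1) u' x :=
        ((Real.hasStrictDerivAt_const_rpow (by norm_num : (0:ℝ) < 2) x).hasDerivAt).sub_const 1
      have hdarg : HasDerivAt (fun R : ℝ => -(a * ((2:ℝ)^R - 1))) (-(a * u')) x :=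
        (hdu.const_mul a).neg
      have hdexp : HasDerivAt (fun R : ℝ => Real.exp (-(a * ((2:ℝ)^R - 1))) - (1 - δ))
          (Real.exp (-(a * u)) * (-(a * u'))) x := hdarg.exp.sub_const _
      have hdF : HasDerivAt F
          (K * ((Real.exp (-(a * u)) * (-(a * u')) * u -
            (Real.exp (-(a * u)) - (1 - δ)) * u') / u ^ 2)) x :=
        (hdexp.div hdu hu.ne').const_mul K
      rw [hdF.deriv]
      -- sign analysis
      have hEb : 1 - δ < Real.exp (-(a * u)) := by
        have huu₀ : u < (2:ℝ)^R₀ - 1 := by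
          have : (2:ℝ)^x < (2:ℝ)^R₀ := (Real.rpow_lt_rpow_left_iff one_lt_two).2 hxR
          simpa [hu_def] using sub_lt_sub_right this 1
        calc 1 - δ = Real.exp (-(a * ((2:ℝ)^R₀ - 1))) := hexp₀.symm
          _ < Real.exp (-(a * u)) := by
              apply Real.exp_lt_exp.2
              nlinarith
      have hE : 0 < Real.exp (-(a * u)) := Real.exp_pos _
      have hnum : Real.exp (-(a * u)) * (-(a * u')) * u -
          (Real.exp (-(a * u)) - (1 - δ)) * u' < 0 := by
        nlinarith [mul_pos (mul_pos (mul_pos ha hu') hu) hE, mul_pos hu' (sub_pos.2 hEb)]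
      have hden : (0:ℝ) < u ^ 2 := by positivity
      have : (Real.exp (-(a * u)) * (-(a * u')) * u -
          (Real.exp (-(a * u)) - (1 - δ)) * u') / u ^ 2 < 0 := div_neg_of_neg_of_pos hnum hden
      nlinarith
  intro x hx y hy hxy
  rw [hEq x hx, hEq y hy]
  exact hF hx hy hxy
end

section
/- Fix parameters P, σ₀², λ₀, λ₂ > 0 and δ ∈ (0,1), and define ψ(R) = (P λ₂ e^{−λ₀ σ₀² (2^R−1)/P})/(λ₀ (2^R−1)(1−δ)) − (λ₂ P)/(λ₀ (2^R−1)) for R > 0, and R₀ = log₂(1 + (−P ln(1−δ))/(λ₀ σ₀²)). Then ψ(R) → +∞ as R → 0⁺, and ψ restricted to (0, R₀] is a bijection onto [0, +∞). -/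
open Real Filter

/-- `ψ(R) → +∞` as `R → 0⁺`, and `ψ` restricted to `(0, R₀]` is a bijection onto `[0, ∞)`. -/
theorem stmt_6 (P σ₀sq lam₀ lam₂ δ : ℝ)
    (hP : 0 < P) (hσ : 0 < σ₀sq) (hlam₀ : 0 < lam₀) (hlam₂ : 0 < lam₂)
    (hδ : δ ∈ Set.Ioo (0 : ℝ) 1)
    (ψ : ℝ → ℝ)
    (hψ : ∀ R : ℝ, ψ R = P * lam₂ * Real.exp (-lam₀ * σ₀sq * ((2 : ℝ) ^ R - 1) / P) /
          (lam₀ * ((2 : ℝ) ^ R - 1) * (1 - δ)) - lam₂ * P / (lam₀ * ((2 : ℝ) ^ R - 1)))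
    (R₀ : ℝ) (hR₀ : R₀ = Real.logb 2 (1 + (-P * Real.log (1 - δ)) / (lam₀ * σ₀sq))) :
    Tendsto ψ (nhdsWithin 0 (Set.Ioi 0)) atTop ∧
    Set.BijOn ψ (Set.Ioc 0 R₀) (Set.Ici 0) := by
  obtain ⟨hδ0, hδ1⟩ := hδ
  have hb : (0:ℝ) < 1 - δ := by linarith
  set a : ℝ := lam₀ * σ₀sq / P with ha_def
  have ha : 0 < a := by positivity
  have hlogb : Real.log (1 - δ) < 0 := Real.log_neg hb (by linarith)
  set t₀ : ℝ := -Real.log (1 - δ) / a with ht₀_def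
  have ht₀ : 0 < t₀ := div_pos (by linarith) ha
  have hexp₀ : Real.exp (-a * t₀) = 1 - δ := by
    have h : -a * t₀ = Real.log (1 - δ) := by
      rw [ht₀_def]; field_simp
    rw [h, Real.exp_log hb]
  set C : ℝ := P * lam₂ / (lam₀ * (1 - δ)) with hC_def
  have hC : 0 < C := by positivity
  set u : ℝ → ℝ := fun t => (Real.exp (-a * t) - (1 - δ)) / t with hu_def
  set f : ℝ → ℝ := fun R => (2:ℝ) ^ R - 1 with hf_def
  have hfmono : ∀ R S : ℝ, R < S → f R < f S := by
    intro R S h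
    have : (2:ℝ) ^ R < (2:ℝ) ^ S := (Real.rpow_lt_rpow_left_iff one_lt_two).2 h
    simp only [hf_def]; linarith
  have hfpos : ∀ R : ℝ, 0 < R → 0 < f R := by
    intro R hR
    have h0 : f 0 = 0 := by simp [hf_def]
    have := hfmono 0 R hR
    linarith
  have hψu : ∀ R : ℝ, 0 < f R → ψ R = C * u (f R) := by
    intro R hfR
    have hne : f R ≠ 0 := ne_of_gt hfR
    have hexp : -lam₀ * σ₀sq * ((2:ℝ) ^ R - 1) / P = -a * f R := by
      rw [ha_def, hf_def]; field_simp; try ring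
    rw [hψ R, hexp]
    simp only [hu_def, hC_def, hf_def] at *
    field_simp
  have hu_anti : ∀ s t : ℝ, 0 < s → s < t → t ≤ t₀ → u t < u s := by
    intro s t hs hst ht
    have htpos : 0 < t := lt_trans hs hst
    have h1 : 1 - δ ≤ Real.exp (-a * t) := by
      rw [← hexp₀]; exact Real.exp_le_exp.2 (by nlinarith)
    have h2 : Real.exp (-a * t) < Real.exp (-a * s) := Real.exp_lt_exp.2 (by nlinarith)
    simp only [hu_def]
    rw [div_lt_div_iff₀ htpos hs]
    nlinarith [mul_nonneg (sub_nonneg.2 hst.le) (sub_nonneg.2 h1),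
      mul_pos htpos (sub_pos.2 h2)]
  have h2R₀ : f R₀ = t₀ := by
    have harg : 1 + (-P * Real.log (1 - δ)) / (lam₀ * σ₀sq) = 1 + t₀ := by
      rw [ht₀_def, ha_def]; field_simp; try ring
    simp only [hf_def]
    rw [hR₀, harg, Real.rpow_logb two_pos (by norm_num) (by linarith)]
    ring
  have hR₀pos : 0 < R₀ := by
    rw [hR₀]
    apply Real.logb_pos one_lt_two
    have h : 0 < (-P * Real.log (1 - δ)) / (lam₀ * σ₀sq) :=
      div_pos (by nlinarith) (by positivity)
    linarith
  have hψR₀ : ψ R₀ = 0 := by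
    rw [hψu R₀ (h2R₀ ▸ ht₀), h2R₀]
    have hu0 : u t₀ = 0 := by
      show (Real.exp (-a * t₀) - (1 - δ)) / t₀ = 0
      rw [hexp₀]; simp
    rw [hu0, mul_zero]
  have hfle : ∀ R : ℝ, R ≤ R₀ → f R ≤ t₀ := by
    intro R hR
    rcases eq_or_lt_of_le hR with h | h
    · rw [h, h2R₀]
    · exact le_of_lt (h2R₀ ▸ hfmono R R₀ h)
  -- strict antitonicity of ψ on Ioc 0 R₀
  have hanti : ∀ s ∈ Set.Ioc (0:ℝ) R₀, ∀ t ∈ Set.Ioc (0:ℝ) R₀, s < t → ψ t < ψ s := by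
    intro s hs t ht hst
    rw [hψu s (hfpos s hs.1), hψu t (hfpos t ht.1)]
    exact mul_lt_mul_of_pos_left
      (hu_anti (f s) (f t) (hfpos s hs.1) (hfmono s t hst) (hfle t ht.2)) hC
  -- continuity
  have hcont2 : Continuous fun R : ℝ => (2:ℝ) ^ R := by
    have h : (fun R : ℝ => (2:ℝ) ^ R) = fun R => Real.exp (Real.log 2 * R) := by
      funext R; rw [Real.rpow_def_of_pos two_pos]
    rw [h]
    exact Real.continuous_exp.comp (continuous_const.mul continuous_id)
  have hcontf : Continuous f := by
    simp only [hf_def]; exact hcont2.sub continuous_const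
  have hcontψ : ContinuousOn ψ (Set.Ioi 0) := by
    have hcu : ContinuousOn (fun R => C * u (f R)) (Set.Ioi (0:ℝ)) := by
      apply ContinuousOn.mul continuousOn_const
      apply ContinuousOn.div
      · exact ((Real.continuous_exp.comp (continuous_const.mul hcontf)).sub
          continuous_const).continuousOn
      · exact hcontf.continuousOn
      · intro R hR; exact ne_of_gt (hfpos R hR)
    exact hcu.congr fun R hR => hψu R (hfpos R hR)
  -- tendsto part
  have htend_f : Tendsto f (nhdsWithin 0 (Set.Ioi 0)) (nhdsWithin 0 (Set.Ioi 0)) := by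
    rw [tendsto_nhdsWithin_iff]
    constructor
    · have h0 : f 0 = 0 := by simp [hf_def]
      have := hcontf.tendsto 0
      rw [h0] at this
      exact this.mono_left nhdsWithin_le_nhds
    · filter_upwards [self_mem_nhdsWithin] with R hR
      exact hfpos R hR
  have htend_u : Tendsto u (nhdsWithin 0 (Set.Ioi 0)) atTop := by
    have h1 : Tendsto (fun t : ℝ => Real.exp (-a * t) - (1 - δ))
        (nhdsWithin 0 (Set.Ioi 0)) (nhds δ) := by
      have hc : Continuous fun t : ℝ => Real.exp (-a * t) - (1 - δ) :=
        (Real.continuous_exp.comp (continuous_const.mul continuous_id)).sub continuous_const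
      have := hc.tendsto 0
      simp only [mul_zero, Real.exp_zero] at this
      have h0 : (1 : ℝ) - (1 - δ) = δ := by ring
      rw [h0] at this
      exact this.mono_left nhdsWithin_le_nhds
    have h2 : Tendsto (fun t : ℝ => t⁻¹) (nhdsWithin 0 (Set.Ioi 0)) atTop :=
      tendsto_inv_nhdsGT_zero
    have := h1.pos_mul_atTop hδ0 h2
    simpa only [hu_def, div_eq_mul_inv] using this
  have htendψ : Tendsto ψ (nhdsWithin 0 (Set.Ioi 0)) atTop := by
    have h := (htend_u.comp htend_f).const_mul_atTop hC
    apply h.congr'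
    filter_upwards [self_mem_nhdsWithin] with R hR
    exact (hψu R (hfpos R hR)).symm
  refine ⟨htendψ, ?_, ?_, ?_⟩
  · -- MapsTo
    intro R hR
    rw [Set.mem_Ici, hψu R (hfpos R hR.1)]
    apply mul_nonneg hC.le
    apply div_nonneg _ (hfpos R hR.1).le
    have : 1 - δ ≤ Real.exp (-a * f R) := by
      rw [← hexp₀]
      exact Real.exp_le_exp.2 (by nlinarith [hfle R hR.2, hfpos R hR.1])
    linarith
  · -- InjOn
    intro s hs t ht heq
    by_contra hne
    rcases lt_or_gt_of_ne hne with h | h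
    · exact absurd heq (ne_of_gt (hanti s hs t ht h))
    · exact absurd heq (ne_of_lt (hanti t ht s hs h))
  · -- SurjOn
    intro y hy
    rw [Set.mem_Ici] at hy
    have hev : ∀ᶠ R in nhdsWithin 0 (Set.Ioi 0), y < ψ R := htendψ.eventually_gt_atTop y
    have hIoo : Set.Ioo (0:ℝ) R₀ ∈ nhdsWithin (0:ℝ) (Set.Ioi 0) :=
      Ioo_mem_nhdsGT_of_mem ⟨le_refl 0, hR₀pos⟩
    obtain ⟨R₁, hR₁y, hR₁mem⟩ := (hev.and (eventually_of_mem hIoo fun x hx => hx)).exists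
    have hsub : Set.Icc R₁ R₀ ⊆ Set.Ioi 0 := fun x hx => lt_of_lt_of_le hR₁mem.1 hx.1
    have hIVT := intermediate_value_Icc' hR₁mem.2.le (hcontψ.mono hsub)
    have hyIn : y ∈ Set.Icc (ψ R₀) (ψ R₁) := ⟨by rw [hψR₀]; exact hy, hR₁y.le⟩
    obtain ⟨R, hRmem, hRy⟩ := hIVT hyIn
    exact ⟨R, ⟨lt_of_lt_of_le hR₁mem.1 hRmem.1, hRmem.2⟩, hRy⟩
end

section
/- Let g₀ and g₂ be independent exponentially distributed random variables with rate parameters λ₀ > 0 and λ₂ > 0, and fix P > 0, σ₀² > 0 and R > 0. Then the outage probability Q ↦ ℙ( log₂(1 + g₀P/(g₂Q + σ₀²)) < R ) is strictly increasing in the jamming power Q on (0, ∞). -/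
/-!
Since `g₀, g₂ > 0` almost surely, the outage event is `g₀ P < (2 ^ R - 1) (g₂ Q + σ₀²)`, which
grows with `Q`. It grows strictly: for `Q₁ < m < Q₂` the event at `Q₂` minus the event at `Q₁`
contains a rectangle `{g₀ ∈ I, g₂ ∈ (Q₁, m]}` with `I ⊆ [0, ∞)`, which has positive probability
by independence, since an exponential law charges every interval of `[0, ∞)`.
-/

open MeasureTheory ProbabilityTheory Real Set

lemma expMeasure_Iic_zero {r : ℝ} (hr : 0 < r) : expMeasure r (Iic 0) = 0 := by
  have := isProbabilityMeasure_expMeasure hr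
  rw [← ofReal_cdf, cdf_expMeasure_eq hr, if_pos le_rfl]
  simp

lemma expMeasure_Ioc_pos {r a b : ℝ} (hr : 0 < r) (ha : 0 ≤ a) (hab : a < b) :
    0 < expMeasure r (Ioc a b) := by
  have := isProbabilityMeasure_expMeasure hr
  rw [← measure_cdf (expMeasure r), StieltjesFunction.measure_Ioc, cdf_expMeasure_eq hr,
    cdf_expMeasure_eq hr, if_pos ha, if_pos (ha.trans hab.le), ENNReal.ofReal_pos]
  have : rexp (-(r * b)) < rexp (-(r * a)) := exp_lt_exp.mpr (by nlinarith)
  linarith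

lemma ae_pos_of_map_eq_expMeasure {Ω : Type*} [MeasurableSpace Ω] {μ : Measure Ω} {X : Ω → ℝ}
    (hX : Measurable X) {r : ℝ} (hr : 0 < r) (h : μ.map X = expMeasure r) :
    ∀ᵐ ω ∂μ, 0 < X ω := by
  refine (ae_map_iff hX.aemeasurable measurableSet_Ioi).mp ?_
  rw [h, ae_iff]
  simp only [not_lt]
  exact expMeasure_Iic_zero hr

lemma measure_lt_measure_of_ae_le_of_sdiff_pos {α : Type*} [MeasurableSpace α] {μ : Measure α}
    [IsFiniteMeasure μ] {s t : Set α} (hst : s ≤ᵐ[μ] t) (hs : MeasurableSet s)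
    (h : 0 < μ (t \ s)) : μ s < μ t := by
  have hs_le : s ≤ᵐ[μ] (t ∩ s : Set α) := by
    simpa only [inter_self] using ae_le_set_inter hst (Filter.EventuallyLE.refl _ s)
  calc μ s ≤ μ (t ∩ s) := measure_mono_ae hs_le
    _ < μ (t ∩ s) + μ (t \ s) := ENNReal.lt_add_right (measure_ne_top μ _) h.ne'
    _ = μ t := measure_inter_add_sdiff t hs

lemma logb_one_add_div_lt_iff {b x d R : ℝ} (hb : 1 < b) (hx : 0 ≤ x) (hd : 0 < d) :
    logb b (1 + x / d) < R ↔ x < (b ^ R - 1) * d := by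
  rw [logb_lt_iff_lt_rpow hb (by positivity), ← lt_sub_iff_add_lt', div_lt_iff₀ hd]

theorem strictMonoOn_measure_mul_lt_mul_add {Ω : Type*} [MeasurableSpace Ω] {μ : Measure Ω}
    [IsFiniteMeasure μ] {X Y : Ω → ℝ} (hX : Measurable X) (hY : Measurable Y)
    (hXY : IndepFun X Y μ) {r s : ℝ} (hr : 0 < r) (hs : 0 < s) (hμX : μ.map X = expMeasure r)
    (hμY : μ.map Y = expMeasure s) {c P σ : ℝ} (hc : 0 < c) (hP : 0 < P) (hσ : 0 ≤ σ) :
    StrictMonoOn (fun Q => μ {ω | X ω * P < c * (Y ω * Q + σ)}) (Ioi 0) := by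
  intro Q₁ hQ₁ Q₂ _ hQ
  rw [mem_Ioi] at hQ₁
  obtain ⟨m, hQ₁m, hmQ₂⟩ := exists_between hQ
  have hm : 0 < m := hQ₁.trans hQ₁m
  have hQ₂ : 0 < Q₂ := hQ₁.trans hQ
  have hI : 0 ≤ c * (Q₁ * m + σ) / P ∧ c * (Q₁ * m + σ) / P < c * (Q₁ * Q₂ + σ) / P := by
    refine ⟨by positivity, div_lt_div_of_pos_right ?_ hP⟩
    nlinarith [mul_pos (mul_pos hc hQ₁) (sub_pos.mpr hmQ₂)]
  set I := Ioc (c * (Q₁ * m + σ) / P) (c * (Q₁ * Q₂ + σ) / P)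
  have hrect : X ⁻¹' I ∩ Y ⁻¹' Ioc Q₁ m ⊆
      {ω | X ω * P < c * (Y ω * Q₂ + σ)} \ {ω | X ω * P < c * (Y ω * Q₁ + σ)} := by
    rintro ω ⟨⟨hXω, hXω'⟩, ⟨hYω, hYω'⟩⟩
    rw [div_lt_iff₀ hP] at hXω
    rw [le_div_iff₀ hP] at hXω'
    exact ⟨show X ω * P < c * (Y ω * Q₂ + σ) by
        nlinarith [mul_pos (mul_pos hc hQ₂) (sub_pos.mpr hYω)],
      fun h : X ω * P < c * (Y ω * Q₁ + σ) => by
        nlinarith [mul_nonneg (mul_nonneg hc.le hQ₁.le) (sub_nonneg.mpr hYω')]⟩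
  have hrect_pos : 0 < μ (X ⁻¹' I ∩ Y ⁻¹' Ioc Q₁ m) := by
    rw [hXY.measure_inter_preimage_eq_mul _ _ measurableSet_Ioc measurableSet_Ioc,
      ← Measure.map_apply hX measurableSet_Ioc, ← Measure.map_apply hY measurableSet_Ioc,
      hμX, hμY]
    exact ENNReal.mul_pos (expMeasure_Ioc_pos hr hI.1 hI.2).ne'
      (expMeasure_Ioc_pos hs hQ₁.le hQ₁m).ne'
  refine measure_lt_measure_of_ae_le_of_sdiff_pos ?_ (measurableSet_lt (by fun_prop) (by fun_prop))
    (hrect_pos.trans_le (measure_mono hrect))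
  filter_upwards [ae_pos_of_map_eq_expMeasure hY hs hμY] with ω hYω hω
  change X ω * P < c * (Y ω * Q₁ + σ) at hω
  change X ω * P < c * (Y ω * Q₂ + σ)
  nlinarith [mul_pos (mul_pos hc hYω) (sub_pos.mpr hQ)]

/-- The outage probability `ℙ(log₂(1 + g₀ P / (g₂ Q + σ₀²)) < R)` is strictly increasing in
the jamming power `Q` on `(0, ∞)`. -/
theorem stmt_7 {Ω : Type*} [MeasurableSpace Ω] (μ : Measure Ω) [IsProbabilityMeasure μ]
    (g₀ g₂ : Ω → ℝ) (hg₀ : Measurable g₀) (hg₂ : Measurable g₂)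
    (hIndep : IndepFun g₀ g₂ μ)
    (lam₀ lam₂ : ℝ) (hlam₀ : 0 < lam₀) (hlam₂ : 0 < lam₂)
    (h₀ : Measure.map g₀ μ = expMeasure lam₀)
    (h₂ : Measure.map g₂ μ = expMeasure lam₂)
    (P σ₀sq R : ℝ) (hP : 0 < P) (hσ : 0 < σ₀sq) (hR : 0 < R) :
    StrictMonoOn
      (fun Q => (μ {ω | Real.logb 2 (1 + g₀ ω * P / (g₂ ω * Q + σ₀sq)) < R}).toReal)
      (Set.Ioi (0 : ℝ)) := by
  have hc : 0 < (2 : ℝ) ^ R - 1 := sub_pos.mpr (one_lt_rpow one_lt_two hR)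
  have houtage : ∀ Q ∈ Ioi (0 : ℝ),
      μ {ω | logb 2 (1 + g₀ ω * P / (g₂ ω * Q + σ₀sq)) < R} =
        μ {ω | g₀ ω * P < (2 ^ R - 1) * (g₂ ω * Q + σ₀sq)} := by
    intro Q (hQ : 0 < Q)
    refine measure_congr (Filter.eventuallyEq_set.mpr ?_)
    filter_upwards [ae_pos_of_map_eq_expMeasure hg₀ hlam₀ h₀,
      ae_pos_of_map_eq_expMeasure hg₂ hlam₂ h₂] with ω hg₀ω hg₂ω
    exact logb_one_add_div_lt_iff one_lt_two (by positivity) (by positivity)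
  intro Q₁ hQ₁ Q₂ hQ₂ hQ
  rw [ENNReal.toReal_lt_toReal (measure_ne_top _ _) (measure_ne_top _ _), houtage Q₁ hQ₁,
    houtage Q₂ hQ₂]
  exact strictMonoOn_measure_mul_lt_mul_add hg₀ hg₂ hIndep hlam₀ hlam₂ h₀ h₂ hc hP hσ.le
    hQ₁ hQ₂ hQ
end

section
/- Fix c > 0 and define φ(x) = log₂(1+x) · e^{−cx} for x ≥ 0. Then there exists a unique x* > 0 satisfying (1+x*) ln(1+x*) = 1/c, and φ'(x) > 0 for all x ∈ [0, x*) while φ'(x) < 0 for all x ∈ (x*, ∞). -/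
/-!
Writing `g x = (1 + x) * log (1 + x)`, one computes
`φ' x = e^{-cx} / ((1 + x) ln 2) * (1 - c * g x)`, so `φ'` has the sign of `1 / c - g x`.
On `[0, ∞)` the function `g` is continuous and strictly increasing (it is `y ↦ y log y` on
`[1, ∞)`), with `g 0 = 0` and `g (e^t) ≥ t`; hence it takes the value `1 / c` exactly once.
-/

open Real Set

theorem strictMonoOn_one_add_mul_log_one_add :
    StrictMonoOn (fun x : ℝ => (1 + x) * log (1 + x)) (Ici 0) :=
  mul_log_strictMonoOn.comp (fun _ _ _ _ h => add_lt_add_right h 1) fun x (hx : 0 ≤ x) =>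
    show exp (-1) ≤ 1 + x by linarith [exp_le_one_iff.2 (by norm_num : (-1 : ℝ) ≤ 0)]

theorem exists_one_add_mul_log_one_add_eq {t : ℝ} (ht : 0 ≤ t) :
    ∃ x, 0 ≤ x ∧ (1 + x) * log (1 + x) = t := by
  have hcont : ContinuousOn (fun x : ℝ => (1 + x) * log (1 + x)) (Icc 0 (exp t)) :=
    (continuous_const.add continuous_id).mul_log.continuousOn
  have hle : t ≤ (1 + exp t) * log (1 + exp t) := by
    have hlog : t ≤ log (1 + exp t) := by
      simpa using log_le_log (exp_pos t) (le_add_of_nonneg_left zero_le_one)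
    exact hlog.trans (le_mul_of_one_le_left (ht.trans hlog) (le_add_of_nonneg_right (exp_pos t).le))
  obtain ⟨x, hx, hxt⟩ := intermediate_value_Icc (exp_pos t).le hcont ⟨by simpa using ht, hle⟩
  exact ⟨x, hx.1, hxt⟩

theorem hasDerivAt_logb_one_add_mul_exp (c : ℝ) {x : ℝ} (hx : -1 < x) :
    HasDerivAt (fun x => logb 2 (1 + x) * exp (-c * x))
      (exp (-c * x) / ((1 + x) * log 2) * (1 - c * ((1 + x) * log (1 + x)))) x := by
  have hx' : 1 + x ≠ 0 := by linarith
  have hlog : HasDerivAt (fun x => logb 2 (1 + x)) (1 / (1 + x) / log 2) x :=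
    (((hasDerivAt_id x).const_add 1).log hx').div_const _
  have hexp : HasDerivAt (fun x => exp (-c * x)) (exp (-c * x) * -c) x := by
    simpa using ((hasDerivAt_id x).const_mul (-c)).exp
  refine (hlog.mul hexp).congr_deriv ?_
  unfold logb
  field_simp
  ring

theorem deriv_logb_one_add_mul_exp_pos {c x : ℝ} (hc : 0 < c) (hx : -1 < x)
    (hgx : (1 + x) * log (1 + x) < 1 / c) :
    0 < deriv (fun x => logb 2 (1 + x) * exp (-c * x)) x := by
  have : 0 < 1 + x := by linarith
  rw [(hasDerivAt_logb_one_add_mul_exp c hx).deriv]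
  exact mul_pos (by positivity) (by rwa [sub_pos, ← lt_div_iff₀' hc])

theorem deriv_logb_one_add_mul_exp_neg {c x : ℝ} (hc : 0 < c) (hx : -1 < x)
    (hgx : 1 / c < (1 + x) * log (1 + x)) :
    deriv (fun x => logb 2 (1 + x) * exp (-c * x)) x < 0 := by
  have : 0 < 1 + x := by linarith
  rw [(hasDerivAt_logb_one_add_mul_exp c hx).deriv]
  exact mul_neg_of_pos_of_neg (by positivity) (by rwa [sub_neg, ← div_lt_iff₀' hc])

/-- For `c > 0` and `φ(x) = log₂(1+x) · e^{-cx}`, there is a unique `x* > 0` with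
`(1+x*) ln(1+x*) = 1/c`, and `φ' > 0` on `[0, x*)` while `φ' < 0` on `(x*, ∞)`. -/
theorem stmt_9 (c : ℝ) (hc : 0 < c) :
    ∃ xs : ℝ, (0 < xs ∧ (1 + xs) * Real.log (1 + xs) = 1 / c) ∧
      (∀ y : ℝ, 0 < y → (1 + y) * Real.log (1 + y) = 1 / c → y = xs) ∧
      (∀ x ∈ Set.Ico (0 : ℝ) xs,
        0 < deriv (fun x : ℝ => Real.logb 2 (1 + x) * Real.exp (-c * x)) x) ∧
      (∀ x ∈ Set.Ioi xs,
        deriv (fun x : ℝ => Real.logb 2 (1 + x) * Real.exp (-c * x)) x < 0) := by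
  have hg := strictMonoOn_one_add_mul_log_one_add
  obtain ⟨xs, hxs_nonneg, hxs⟩ := exists_one_add_mul_log_one_add_eq (one_div_pos.2 hc).le
  have hxs_pos : 0 < xs := hxs_nonneg.lt_of_ne <| by
    rintro rfl
    exact hc.ne (by simpa using hxs)
  refine ⟨xs, ⟨hxs_pos, hxs⟩, fun y hy hyc => ?_, fun x hx => ?_, fun x (hx : xs < x) => ?_⟩
  · exact hg.injOn hy.le hxs_pos.le (hyc.trans hxs.symm)
  · refine deriv_logb_one_add_mul_exp_pos hc (by linarith [hx.1]) ?_
    exact hxs ▸ hg hx.1 hxs_pos.le hx.2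
  · refine deriv_logb_one_add_mul_exp_neg hc (by linarith) ?_
    exact hxs ▸ hg hxs_pos.le (hxs_pos.trans hx).le hx
end

section
/- Fix c > 0, let R* be the unique positive real with (ln 2) · R* · 2^{R*} = 1/c, and define f(R) = R · e^{−c(2^R − 1)}. Then for any reals 0 < a ≤ b, the point R_opt = max(min(b, R*), a) satisfies R_opt ∈ [a, b] and f(R_opt) ≥ f(R) for all R ∈ [a, b]. -/
/-!
Since `c log 2 · R* 2^{R*} = 1`, the derivative of `f` is
`e^{-c(2^R-1)} · c log 2 · (R* 2^{R*} - R 2^R)`, and `R 2^R` stays below `R* 2^{R*}` left of `R*`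
and above it right of `R*`. So `f` increases up to `R*` and decreases after it, and on `[a, b]`
its maximum sits at the projection of `R*` onto `[a, b]`.
-/

open Real Set

theorem isMaxOn_max_min_of_monotoneOn_of_antitoneOn {α β : Type*} [LinearOrder α] [Preorder β]
    {f : α → β} {m a b : α} (hmono : MonotoneOn f (Iic m)) (hanti : AntitoneOn f (Ici m))
    (hab : a ≤ b) : IsMaxOn f (Icc a b) (max (min b m) a) := by
  intro R ⟨haR, hRb⟩
  rcases le_total m a with hma | ham
  · rw [max_eq_right ((min_le_right b m).trans hma)]
    exact hanti hma (hma.trans haR) haR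
  rcases le_total b m with hbm | hmb
  · rw [min_eq_left hbm, max_eq_left hab]
    exact hmono (hRb.trans hbm) hbm hRb
  rw [min_eq_right hmb, max_eq_left ham]
  rcases le_total R m with hRm | hmR
  · exact hmono hRm le_rfl hRm
  · exact hanti le_rfl hmR hmR

theorem mul_rpow_lt_mul_rpow {b x y : ℝ} (hb : 1 ≤ b) (hy : 0 < y) (hxy : x < y) :
    x * b ^ x < y * b ^ y := by
  have hby : 0 < b ^ y := rpow_pos_of_pos (zero_lt_one.trans_le hb) y
  rcases le_or_gt x 0 with hx | hx
  · calc x * b ^ x ≤ 0 := mul_nonpos_of_nonpos_of_nonneg hx (rpow_nonneg (by linarith) x)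
      _ < y * b ^ y := mul_pos hy hby
  · calc x * b ^ x ≤ x * b ^ y := by gcongr
      _ < y * b ^ y := by gcongr

noncomputable def eavesdropRate (c R : ℝ) : ℝ := R * exp (-c * ((2 : ℝ) ^ R - 1))

theorem hasDerivAt_eavesdropRate (c x : ℝ) :
    HasDerivAt (eavesdropRate c)
      (exp (-c * ((2 : ℝ) ^ x - 1)) * (1 - c * log 2 * (x * (2 : ℝ) ^ x))) x := by
  have h2 : HasDerivAt (fun R : ℝ => (2 : ℝ) ^ R) ((2 : ℝ) ^ x * log 2) x :=
    (hasStrictDerivAt_const_rpow two_pos x).hasDerivAt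
  refine ((hasDerivAt_id' x).mul ((h2.sub_const 1).const_mul (-c)).exp).congr_deriv ?_
  ring

theorem one_sub_mul_log_two_mul_rpow_eq {c Rs : ℝ} (hc : 0 < c)
    (hRs_eq : log 2 * Rs * (2 : ℝ) ^ Rs = 1 / c) (x : ℝ) :
    1 - c * log 2 * (x * (2 : ℝ) ^ x) = c * log 2 * (Rs * (2 : ℝ) ^ Rs - x * (2 : ℝ) ^ x) := by
  have hone : c * (log 2 * Rs * (2 : ℝ) ^ Rs) = 1 := by rw [hRs_eq]; field_simp
  linear_combination -hone

theorem monotoneOn_eavesdropRate {c Rs : ℝ} (hc : 0 < c) (hRs : 0 < Rs)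
    (hRs_eq : log 2 * Rs * (2 : ℝ) ^ Rs = 1 / c) : MonotoneOn (eavesdropRate c) (Iic Rs) := by
  refine monotoneOn_of_hasDerivWithinAt_nonneg (convex_Iic Rs)
    (fun x _ => (hasDerivAt_eavesdropRate c x).continuousAt.continuousWithinAt)
    (fun x _ => (hasDerivAt_eavesdropRate c x).hasDerivWithinAt) fun x hx => ?_
  rw [interior_Iic] at hx
  have hlt : x * (2 : ℝ) ^ x < Rs * (2 : ℝ) ^ Rs := mul_rpow_lt_mul_rpow one_le_two hRs hx
  rw [one_sub_mul_log_two_mul_rpow_eq hc hRs_eq]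
  exact mul_nonneg (exp_pos _).le
    (mul_nonneg (mul_pos hc (log_pos one_lt_two)).le (sub_nonneg.2 hlt.le))

theorem antitoneOn_eavesdropRate {c Rs : ℝ} (hc : 0 < c) (hRs : 0 < Rs)
    (hRs_eq : log 2 * Rs * (2 : ℝ) ^ Rs = 1 / c) : AntitoneOn (eavesdropRate c) (Ici Rs) := by
  refine antitoneOn_of_hasDerivWithinAt_nonpos (convex_Ici Rs)
    (fun x _ => (hasDerivAt_eavesdropRate c x).continuousAt.continuousWithinAt)
    (fun x _ => (hasDerivAt_eavesdropRate c x).hasDerivWithinAt) fun x hx => ?_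
  rw [interior_Ici] at hx
  have hlt : Rs * (2 : ℝ) ^ Rs < x * (2 : ℝ) ^ x :=
    mul_rpow_lt_mul_rpow one_le_two (hRs.trans hx) hx
  rw [one_sub_mul_log_two_mul_rpow_eq hc hRs_eq]
  exact mul_nonpos_of_nonneg_of_nonpos (exp_pos _).le
    (mul_nonpos_of_nonneg_of_nonpos (mul_pos hc (log_pos one_lt_two)).le (sub_nonpos.2 hlt.le))

theorem stmt_12_general (c : ℝ) (hc : 0 < c) (Rs : ℝ) (hRs : 0 < Rs)
    (hRs_eq : Real.log 2 * Rs * (2 : ℝ) ^ Rs = 1 / c)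
    (a b : ℝ) (hab : a ≤ b) :
    max (min b Rs) a ∈ Set.Icc a b ∧
    ∀ R ∈ Set.Icc a b,
      R * Real.exp (-c * ((2 : ℝ) ^ R - 1)) ≤
        max (min b Rs) a * Real.exp (-c * ((2 : ℝ) ^ (max (min b Rs) a) - 1)) :=
  ⟨⟨le_max_right _ _, max_le (min_le_left _ _) hab⟩,
    isMaxOn_max_min_of_monotoneOn_of_antitoneOn (monotoneOn_eavesdropRate hc hRs hRs_eq)
      (antitoneOn_eavesdropRate hc hRs hRs_eq) hab⟩

/-- Optimality of `R_opt = max (min b R*) a` for `f(R) = R e^{-c(2^R-1)}` over `[a, b]`,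
where `R*` is the unique positive root of `(ln 2) R 2^R = 1/c`. -/
theorem stmt_12 (c : ℝ) (hc : 0 < c) (Rs : ℝ) (hRs : 0 < Rs)
    (hRs_eq : Real.log 2 * Rs * (2 : ℝ) ^ Rs = 1 / c)
    (a b : ℝ) (ha : 0 < a) (hab : a ≤ b) :
    max (min b Rs) a ∈ Set.Icc a b ∧
    ∀ R ∈ Set.Icc a b,
      R * Real.exp (-c * ((2 : ℝ) ^ R - 1)) ≤
        max (min b Rs) a * Real.exp (-c * ((2 : ℝ) ^ (max (min b Rs) a) - 1)) :=
  stmt_12_general c hc Rs hRs hRs_eq a b hab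
end

section
/- Fix parameters P, σ₀², λ₀, λ₂ > 0 and δ ∈ (0,1), define ψ(R) = (P λ₂ e^{−λ₀ σ₀² (2^R−1)/P})/(λ₀ (2^R−1)(1−δ)) − (λ₂ P)/(λ₀ (2^R−1)) for R > 0 and R₀ = log₂(1 + (−P ln(1−δ))/(λ₀ σ₀²)). Let Q_max > 0, let a ∈ (0, R₀] be the unique rate with ψ(a) = Q_max, and let R* > 0 be any real with R* ≥ a. Then ψ( max(min(R₀, R*), a) ) = min( max(0, ψ(R*)), Q_max ). -/
/-!
Write `ψ R = (P λ₂ / λ₀) · f R / (2^R - 1)` with `f = outageMargin`, i.e.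
`f R = e^{-λ₀ σ₀² (2^R - 1) / P} / (1 - δ) - 1`. The numerator `f` is decreasing and vanishes
exactly at `R₀`, so on `(0, R₀]` the quotient is a nonnegative decreasing function divided by a
positive increasing one, hence decreasing, while `ψ ≤ 0` beyond `R₀`. Clamping `R*` to
`[a, R₀]` and clamping `ψ R*` to `[0, ψ a]` therefore agree.
-/

open Real Set

theorem AntitoneOn.div_of_monotoneOn {α : Type*} [Preorder α] {f g : α → ℝ} {s : Set α}
    (hf : AntitoneOn f s) (hg : MonotoneOn g s) (hf₀ : ∀ x ∈ s, 0 ≤ f x)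
    (hg₀ : ∀ x ∈ s, 0 < g x) : AntitoneOn (fun x => f x / g x) s := by
  intro x hx y hy hxy
  calc f y / g y ≤ f x / g y := div_le_div_of_nonneg_right (hf hx hy hxy) (hg₀ y hy).le
    _ ≤ f x / g x := div_le_div_of_nonneg_left (hf₀ x hx) (hg₀ x hx) (hg hx hy hxy)

theorem apply_max_min_eq_min_max_of_antitoneOn {α β : Type*} [LinearOrder α] [LinearOrder β]
    [Zero β] {ψ : α → β} {R₀ a R : α} (hanti : AntitoneOn ψ (Icc a R₀)) (hR₀ : ψ R₀ = 0)
    (hnonpos : ∀ x, R₀ ≤ x → ψ x ≤ 0) (haR₀ : a ≤ R₀) (haR : a ≤ R) :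
    ψ (max (min R₀ R) a) = min (max 0 (ψ R)) (ψ a) := by
  have hψa : 0 ≤ ψ a := hR₀ ▸ hanti ⟨le_rfl, haR₀⟩ ⟨haR₀, le_rfl⟩ haR₀
  rcases le_total R R₀ with h | h
  · rw [min_eq_right h, max_eq_left haR,
      max_eq_right (hR₀ ▸ hanti ⟨haR, h⟩ ⟨haR₀, le_rfl⟩ h),
      min_eq_left (hanti ⟨le_rfl, haR₀⟩ ⟨haR, h⟩ haR)]
  · rw [min_eq_left h, max_eq_left haR₀, hR₀, max_eq_left (hnonpos R h), min_eq_left hψa]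

theorem monotone_two_rpow_sub_one : Monotone (fun R : ℝ => (2 : ℝ) ^ R - 1) :=
  fun _ _ h => sub_le_sub_right (rpow_le_rpow_of_exponent_le one_le_two h) 1

theorem two_rpow_sub_one_pos {R : ℝ} (hR : 0 < R) : 0 < (2 : ℝ) ^ R - 1 :=
  sub_pos.mpr (one_lt_rpow one_lt_two hR)

theorem antitoneOn_const_mul_div_two_rpow_sub_one {f : ℝ → ℝ} {c a R₀ : ℝ} (hc : 0 ≤ c)
    (hf : Antitone f) (hfR₀ : f R₀ = 0) (ha : 0 < a) :
    AntitoneOn (fun R => c * (f R / ((2 : ℝ) ^ R - 1))) (Icc a R₀) := by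
  have hquot := (hf.antitoneOn (Icc a R₀)).div_of_monotoneOn
    (monotone_two_rpow_sub_one.monotoneOn _) (fun x (hx : x ∈ Icc a R₀) => hfR₀ ▸ hf hx.2)
    (fun x hx => two_rpow_sub_one_pos (ha.trans_le hx.1))
  exact fun x hx y hy hxy => mul_le_mul_of_nonneg_left (hquot hx hy hxy) hc

theorem const_mul_div_two_rpow_sub_one_nonpos {f : ℝ → ℝ} {c R₀ R : ℝ} (hc : 0 ≤ c)
    (hf : Antitone f) (hfR₀ : f R₀ = 0) (hR₀ : 0 < R₀) (hR : R₀ ≤ R) :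
    c * (f R / ((2 : ℝ) ^ R - 1)) ≤ 0 :=
  mul_nonpos_of_nonneg_of_nonpos hc <|
    div_nonpos_of_nonpos_of_nonneg (hfR₀ ▸ hf hR) (two_rpow_sub_one_pos (hR₀.trans_le hR)).le

section OutageMargin

variable (P σ₀sq lam₀ δ : ℝ)

noncomputable def outageMargin (R : ℝ) : ℝ :=
  exp (-lam₀ * σ₀sq * ((2 : ℝ) ^ R - 1) / P) / (1 - δ) - 1

theorem jamming_power_eq_mul_outageMargin_div (lam₂ R : ℝ) :
    P * lam₂ * exp (-lam₀ * σ₀sq * ((2 : ℝ) ^ R - 1) / P) / (lam₀ * ((2 : ℝ) ^ R - 1) * (1 - δ))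
      - lam₂ * P / (lam₀ * ((2 : ℝ) ^ R - 1))
      = P * lam₂ / lam₀ * (outageMargin P σ₀sq lam₀ δ R / ((2 : ℝ) ^ R - 1)) := by
  simp only [outageMargin, div_eq_mul_inv, mul_inv]
  ring

variable {P σ₀sq lam₀ δ}

theorem antitone_outageMargin (hP : 0 ≤ P) (hσ : 0 ≤ σ₀sq) (hlam₀ : 0 ≤ lam₀) (hδ : δ ≤ 1) :
    Antitone (outageMargin P σ₀sq lam₀ δ) := fun x y hxy => by
  have h2 : (2 : ℝ) ^ x - 1 ≤ 2 ^ y - 1 := monotone_two_rpow_sub_one hxy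
  have hexp : -lam₀ * σ₀sq * ((2 : ℝ) ^ y - 1) / P ≤ -lam₀ * σ₀sq * ((2 : ℝ) ^ x - 1) / P := by
    refine div_le_div_of_nonneg_right ?_ hP
    nlinarith [mul_nonneg hlam₀ hσ]
  exact sub_le_sub_right (div_le_div_of_nonneg_right (exp_le_exp.mpr hexp) (sub_nonneg.mpr hδ)) 1

theorem outageMargin_logb_eq_zero (hP : 0 < P) (hσ : 0 < σ₀sq) (hlam₀ : 0 < lam₀)
    (hδ₀ : 0 ≤ δ) (hδ₁ : δ < 1) :
    outageMargin P σ₀sq lam₀ δ (logb 2 (1 + (-P * log (1 - δ)) / (lam₀ * σ₀sq))) = 0 := by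
  have h1δ : 0 < 1 - δ := sub_pos.mpr hδ₁
  have hlog : 0 ≤ -P * log (1 - δ) / (lam₀ * σ₀sq) := by
    have : 0 ≤ -P * log (1 - δ) :=
      mul_nonneg_of_nonpos_of_nonpos (neg_nonpos.mpr hP.le) (log_nonpos h1δ.le (by linarith))
    positivity
  have hexponent : -lam₀ * σ₀sq * ((2 : ℝ) ^ logb 2 (1 + (-P * log (1 - δ)) / (lam₀ * σ₀sq)) - 1)
      / P = log (1 - δ) := by
    rw [rpow_logb two_pos (by norm_num) (by linarith)]
    field_simp
    ring
  simp only [outageMargin, hexponent, exp_log h1δ, div_self h1δ.ne', sub_self]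

end OutageMargin

theorem stmt_13_general (P σ₀sq lam₀ lam₂ δ : ℝ)
    (hP : 0 < P) (hσ : 0 < σ₀sq) (hlam₀ : 0 < lam₀) (hlam₂ : 0 < lam₂)
    (hδ : δ ∈ Set.Ioo (0 : ℝ) 1)
    (ψ : ℝ → ℝ)
    (hψ : ∀ R : ℝ, ψ R = P * lam₂ * Real.exp (-lam₀ * σ₀sq * ((2 : ℝ) ^ R - 1) / P) /
          (lam₀ * ((2 : ℝ) ^ R - 1) * (1 - δ)) - lam₂ * P / (lam₀ * ((2 : ℝ) ^ R - 1)))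
    (R₀ : ℝ) (hR₀ : R₀ = Real.logb 2 (1 + (-P * Real.log (1 - δ)) / (lam₀ * σ₀sq)))
    (Qmax : ℝ)
    (a : ℝ) (ha : a ∈ Set.Ioc 0 R₀) (haQ : ψ a = Qmax)
    (Rs : ℝ) (hRsa : a ≤ Rs) :
    ψ (max (min R₀ Rs) a) = min (max 0 (ψ Rs)) Qmax := by
  obtain ⟨hδ₀, hδ₁⟩ := hδ
  have hf := antitone_outageMargin hP.le hσ.le hlam₀.le hδ₁.le
  have hfR₀ : outageMargin P σ₀sq lam₀ δ R₀ = 0 :=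
    hR₀ ▸ outageMargin_logb_eq_zero hP hσ hlam₀ hδ₀.le hδ₁
  have hc : 0 ≤ P * lam₂ / lam₀ := by positivity
  obtain rfl : ψ = fun R => P * lam₂ / lam₀ * (outageMargin P σ₀sq lam₀ δ R / ((2 : ℝ) ^ R - 1)) :=
    funext fun R => (hψ R).trans (jamming_power_eq_mul_outageMargin_div P σ₀sq lam₀ δ lam₂ R)
  rw [← haQ]
  exact apply_max_min_eq_min_max_of_antitoneOn
    (antitoneOn_const_mul_div_two_rpow_sub_one hc hf hfR₀ ha.1)
    (by rw [hfR₀, zero_div, mul_zero])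
    (fun R hR => const_mul_div_two_rpow_sub_one_nonpos hc hf hfR₀ (ha.1.trans_le ha.2) hR)
    ha.2 hRsa

/-- The optimal jamming power identity of Theorem III.1:
`ψ(max (min R₀ R*) a) = min (max 0 (ψ R*)) Q_max`, where `a = ψ⁻¹(Q_max)`. -/
theorem stmt_13 (P σ₀sq lam₀ lam₂ δ : ℝ)
    (hP : 0 < P) (hσ : 0 < σ₀sq) (hlam₀ : 0 < lam₀) (hlam₂ : 0 < lam₂)
    (hδ : δ ∈ Set.Ioo (0 : ℝ) 1)
    (ψ : ℝ → ℝ)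
    (hψ : ∀ R : ℝ, ψ R = P * lam₂ * Real.exp (-lam₀ * σ₀sq * ((2 : ℝ) ^ R - 1) / P) /
          (lam₀ * ((2 : ℝ) ^ R - 1) * (1 - δ)) - lam₂ * P / (lam₀ * ((2 : ℝ) ^ R - 1)))
    (R₀ : ℝ) (hR₀ : R₀ = Real.logb 2 (1 + (-P * Real.log (1 - δ)) / (lam₀ * σ₀sq)))
    (Qmax : ℝ) (hQmax : 0 < Qmax)
    (a : ℝ) (ha : a ∈ Set.Ioc 0 R₀) (haQ : ψ a = Qmax)
    (Rs : ℝ) (hRs : 0 < Rs) (hRsa : a ≤ Rs) :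
    ψ (max (min R₀ Rs) a) = min (max 0 (ψ Rs)) Qmax :=
  stmt_13_general P σ₀sq lam₀ lam₂ δ hP hσ hlam₀ hlam₂ hδ ψ hψ R₀ hR₀ Qmax a ha haQ Rs hRsa
end
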